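/- arXiv:1707.02506 — 2 statements merged into one kernel-verified Lean document; each statement's English description precedes it below -/
import Mathlib

section
/- Define =^f on the powerset of ℕ×ℕ by A =^f B iff for every x ∈ ℕ, the x-th columns A^{[x]} = {y : (x,y) ∈ A} and B^{[x]} have the same cardinality. The quotient space P(ℕ×ℕ)/=^f (quotient of the product topology) is not homeomorphic to the Scott topology on P(ℕ). -/
/-!
In the Scott topology the closure of a point `A` is its powerset, of cardinality `2 ^ #A`, which
is never `3`. In the quotient, the sets `{A | n ≤ #(column A x)}` are saturated and open, so a
class only specializes to classes with pointwise smaller column cardinalities. Conversely, points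
of a finite column can be pushed off to infinity, so the class whose only nonempty column has two
elements has in its closure exactly the three classes with a single column of size `0`, `1`, `2`.
-/

open TopologicalSpace

/-- The Scott topology on the powerset of ℕ. -/
def scottTop : TopologicalSpace (Set ℕ) :=
  generateFrom {U | ∃ F : Finset ℕ, U = {A : Set ℕ | ↑F ⊆ A}}

/-- The equivalence relation =^f : corresponding columns have the same cardinality. -/
def eqF (A B : ℕ × ℕ → Bool) : Prop :=
  ∀ x : ℕ, Cardinal.mk {y : ℕ | A (x, y) = true} = Cardinal.mk {y : ℕ | B (x, y) = true}

open Cardinal Set Filter Topology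

universe u

theorem Cardinal.two_power_ne_three (κ : Cardinal) : (2 : Cardinal) ^ κ ≠ 3 := by
  intro h
  rcases lt_or_ge κ ℵ₀ with hκ | hκ
  · obtain ⟨n, rfl⟩ := lt_aleph0.1 hκ
    have h' : 2 ^ n = 3 := by exact_mod_cast h
    rcases n with _ | n
    · simp at h'
    · omega
  · have : ℵ₀ ≤ (3 : Cardinal) := h ▸ hκ.trans (cantor κ).le
    exact ofNat_lt_aleph0.not_ge this

theorem Homeomorph.mk_closure_singleton {X Y : Type u} [TopologicalSpace X] [TopologicalSpace Y]
    (h : X ≃ₜ Y) (x : X) : #(closure {h x}) = #(closure {x}) := by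
  rw [← image_singleton, ← h.image_closure, mk_image_eq h.injective]

theorem specializes_generateFrom_iff {α : Type*} {g : Set (Set α)} {x y : α} :
    @Specializes α (generateFrom g) x y ↔ ∀ s ∈ g, y ∈ s → x ∈ s := by
  let _ := generateFrom g
  refine ⟨fun h s hs => h.mem_open (isOpen_generateFrom_of_mem hs), fun h => ?_⟩
  rw [specializes_iff_pure, nhds_generateFrom]
  exact le_iInf₂ fun s hs => le_principal_iff.2 (h s hs.2 hs.1)

section Scott

attribute [local instance] scottTop

theorem scottTop_specializes_iff {A B : Set ℕ} : A ⤳ B ↔ B ⊆ A := by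
  refine specializes_generateFrom_iff.trans ⟨fun h n hn => ?_, ?_⟩
  · simpa using h _ ⟨{n}, rfl⟩ (by simpa using hn)
  · rintro hBA _ ⟨F, rfl⟩ hF
    exact hF.trans hBA

theorem scottTop_closure_singleton (A : Set ℕ) : closure {A} = 𝒫 A := by
  ext B
  exact specializes_iff_mem_closure.symm.trans scottTop_specializes_iff

theorem mk_scottTop_closure_singleton (A : Set ℕ) : #(closure {A}) = 2 ^ #A := by
  rw [scottTop_closure_singleton, mk_powerset]

end Scott

namespace eqF

def column (A : ℕ × ℕ → Bool) (x : ℕ) : Set ℕ := {y | A (x, y) = true}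

theorem isOpen_setOf_natCast_le_mk_column (x n : ℕ) :
    IsOpen {A : ℕ × ℕ → Bool | (n : Cardinal) ≤ #(column A x)} := by
  have hunion : {A : ℕ × ℕ → Bool | (n : Cardinal) ≤ #(column A x)} =
      ⋃ t : Finset ℕ, ⋃ _ : t.card = n, ⋂ y ∈ t, (fun A => A (x, y)) ⁻¹' {true} := by
    ext A
    simp only [mem_ofPred_eq, mem_iUnion, mem_iInter, mem_preimage, mem_singleton_iff,
      le_mk_iff_exists_subset]
    constructor
    · rintro ⟨p, hp, hpn⟩
      obtain ⟨t, rfl, rfl⟩ := mk_set_eq_nat_iff_finset.1 hpn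
      exact ⟨t, rfl, fun y hy => hp hy⟩
    · rintro ⟨t, rfl, ht⟩
      exact ⟨t, fun y hy => ht y hy, mk_coe_finset⟩
  rw [hunion]
  exact isOpen_iUnion fun t => isOpen_iUnion fun _ => isOpen_biInter_finset fun y _ =>
    (isOpen_discrete _).preimage (continuous_apply (x, y))

def columnCard (x : ℕ) : Quot eqF → Cardinal :=
  Quot.lift (fun A => #(column A x)) fun _ _ h => h x

theorem columnCard_mk (A : ℕ × ℕ → Bool) (x : ℕ) :
    columnCard x (Quot.mk eqF A) = #(column A x) := rfl

theorem eq_of_columnCard_eq {q q' : Quot eqF} (h : ∀ x, columnCard x q = columnCard x q') :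
    q = q' := by
  induction q using Quot.ind
  induction q' using Quot.ind
  exact Quot.sound h

theorem columnCard_le_aleph0 (x : ℕ) (q : Quot eqF) : columnCard x q ≤ ℵ₀ := by
  induction q using Quot.ind
  exact mk_le_aleph0

theorem isOpen_setOf_natCast_le_columnCard (x n : ℕ) :
    IsOpen {q : Quot eqF | (n : Cardinal) ≤ columnCard x q} :=
  isOpen_coinduced.2 (isOpen_setOf_natCast_le_mk_column x n)

theorem columnCard_le_of_specializes {q q' : Quot eqF} (h : q ⤳ q') (x : ℕ) :
    columnCard x q' ≤ columnCard x q := by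
  have key (n : ℕ) : (n : Cardinal) ≤ columnCard x q' → n ≤ columnCard x q :=
    h.mem_open (isOpen_setOf_natCast_le_columnCard x n)
  rcases (columnCard_le_aleph0 x q').lt_or_eq with hlt | heq
  · obtain ⟨n, hn⟩ := lt_aleph0.1 hlt
    exact hn ▸ key n hn.ge
  · exact heq ▸ aleph0_le.2 fun n => key n (heq ▸ natCast_lt_aleph0.le)

def ofColumnZero (s : Finset ℕ) : ℕ × ℕ → Bool := fun p => decide (p.1 = 0 ∧ p.2 ∈ s)

theorem columnCard_mk_ofColumnZero (s : Finset ℕ) (x : ℕ) :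
    columnCard x (Quot.mk eqF (ofColumnZero s)) =
      if x = 0 then (s.card : Cardinal) else 0 := by
  rw [columnCard_mk]
  split_ifs with hx
  · subst hx
    rw [← mk_coe_finset]
    congr
    ext y
    simp [column, ofColumnZero]
  · simp [column, ofColumnZero, hx]

theorem tendsto_ofColumnZero {u : ℕ → Finset ℕ} {s : Finset ℕ}
    (h : ∀ y, ∀ᶠ N in atTop, y ∈ u N ↔ y ∈ s) :
    Tendsto (fun N => ofColumnZero (u N)) atTop (𝓝 (ofColumnZero s)) :=
  tendsto_pi_nhds.2 fun p =>
    tendsto_nhds_of_eventually_eq ((h p.2).mono fun N hN => by simp [ofColumnZero, hN])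

theorem mk_ofColumnZero_range_specializes {k m : ℕ} (hkm : k ≤ m) :
    Quot.mk eqF (ofColumnZero (Finset.range m)) ⤳
      Quot.mk eqF (ofColumnZero (Finset.range k)) := by
  -- `u N` has `m` elements, but all except those of `range k` lie above `N`.
  let u : ℕ → Finset ℕ := fun N => Finset.range k ∪ Finset.Ico (N + k) (N + m)
  have hu (N : ℕ) :
      Quot.mk eqF (ofColumnZero (u N)) = Quot.mk eqF (ofColumnZero (Finset.range m)) := by
    have hdisj : Disjoint (Finset.range k) (Finset.Ico (N + k) (N + m)) := by
      rw [Finset.disjoint_left]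
      intro y hy hy'
      simp only [Finset.mem_range, Finset.mem_Ico] at hy hy'
      omega
    refine eq_of_columnCard_eq fun x => ?_
    simp only [columnCard_mk_ofColumnZero, u, Finset.card_union_of_disjoint hdisj,
      Finset.card_range, Nat.card_Ico]
    congr 2
    omega
  have hlim : Tendsto (fun N => ofColumnZero (u N)) atTop (𝓝 (ofColumnZero (Finset.range k))) :=
    tendsto_ofColumnZero fun y => (eventually_gt_atTop y).mono fun N hN => by
      simp only [u, Finset.mem_union, Finset.mem_range, Finset.mem_Ico]
      omega
  exact specializes_iff_mem_closure.2 <| mem_closure_of_tendsto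
    ((continuous_quot_mk.tendsto _).comp hlim) (Eventually.of_forall fun N => hu N)

theorem mk_ofColumnZero_range_specializes_iff {m : ℕ} {q : Quot eqF} :
    Quot.mk eqF (ofColumnZero (Finset.range m)) ⤳ q ↔
      ∃ k ≤ m, q = Quot.mk eqF (ofColumnZero (Finset.range k)) := by
  refine ⟨fun h => ?_, ?_⟩
  · have hle := columnCard_le_of_specializes h
    simp only [columnCard_mk_ofColumnZero, Finset.card_range] at hle
    obtain ⟨k, hk⟩ := lt_aleph0.1 ((hle 0).trans_lt (by simp))
    have hkm : k ≤ m := by exact_mod_cast hk ▸ hle 0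
    refine ⟨k, hkm, eq_of_columnCard_eq fun x => ?_⟩
    rw [columnCard_mk_ofColumnZero, Finset.card_range]
    split_ifs with hx
    · exact hx ▸ hk
    · simpa [hx] using hle x
  · rintro ⟨k, hkm, rfl⟩
    exact mk_ofColumnZero_range_specializes hkm

theorem mk_closure_singleton_mk_ofColumnZero_range (m : ℕ) :
    #(closure {Quot.mk eqF (ofColumnZero (Finset.range m))}) = m + 1 := by
  have hclosure : closure {Quot.mk eqF (ofColumnZero (Finset.range m))} =
      range fun k : Fin (m + 1) => Quot.mk eqF (ofColumnZero (Finset.range k)) := by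
    ext q
    rw [← specializes_iff_mem_closure, mk_ofColumnZero_range_specializes_iff]
    simp [Fin.exists_iff, eq_comm]
  have hinj : Function.Injective
      fun k : Fin (m + 1) => Quot.mk eqF (ofColumnZero (Finset.range k)) :=
    fun i j h => Fin.ext (by simpa [columnCard_mk_ofColumnZero] using congrArg (columnCard 0) h)
  rw [hclosure, mk_range_eq _ hinj, mk_fin, Nat.cast_succ]

end eqF

/-- The quotient 2^{ℕ×ℕ}/=^f (with the quotient of the product topology) is not
homeomorphic to the powerset of ℕ with the Scott topology. -/
theorem quotient_eqF_not_homeomorph_scott :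
    IsEmpty (@Homeomorph (Quot eqF) (Set ℕ) _ scottTop) := by
  let _ := scottTop
  refine ⟨fun h => two_power_ne_three #(h (Quot.mk eqF (eqF.ofColumnZero (Finset.range 2)))) ?_⟩
  rw [← mk_scottTop_closure_singleton, h.mk_closure_singleton,
    eqF.mk_closure_singleton_mk_ofColumnZero_range]
  norm_num
end

section
/- Two algebraic extensions F and K of ℚ (subfields of a fixed algebraic closure, or abstract countable algebraic fields of characteristic 0) are isomorphic if and only if every polynomial in ℚ[X] that has a root in F also has a root in K and vice versa. -/
open Polynomial

theorem AlgEquiv.exists_aeval_eq_zero_iff {R A B : Type*} [CommSemiring R] [Semiring A]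
    [Semiring B] [Algebra R A] [Algebra R B] (e : A ≃ₐ[R] B) (p : R[X]) :
    (∃ x : A, aeval x p = 0) ↔ ∃ y : B, aeval y p = 0 :=
  e.toEquiv.exists_congr fun x => by
    rw [AlgEquiv.toEquiv_eq_coe, EquivLike.coe_coe, aeval_algEquiv, AlgHom.comp_apply,
      AlgEquiv.coe_toAlgHom, map_eq_zero_iff _ e.injective]

theorem algebraic_fields_iso_iff_same_roots_general
    (F K : Type) [Field F] [Field K] [Algebra ℚ F] [Algebra ℚ K]
    [Algebra.IsAlgebraic ℚ F] [Algebra.IsAlgebraic ℚ K] :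
    Nonempty (F ≃+* K) ↔
      ∀ p : Polynomial ℚ,
        (∃ x : F, aeval x p = 0) ↔ (∃ y : K, aeval y p = 0) := by
  refine ⟨fun ⟨e⟩ => e.toRatAlgEquiv.exists_aeval_eq_zero_iff, fun h => ?_⟩
  -- Isaacs: each field embeds over ℚ into the other, and mutual embeddings of algebraic
  -- extensions are bijective.
  obtain ⟨e⟩ := Field.nonempty_algEquiv_of_aeval_eq_zero_eq (F := ℚ) (Set.ext h)
  exact ⟨e.toRingEquiv⟩

/-- Two countable algebraic extensions of ℚ are isomorphic iff every rational
polynomial with a root in one has a root in the other, and vice versa. -/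
theorem algebraic_fields_iso_iff_same_roots
    (F K : Type) [Field F] [Field K] [Algebra ℚ F] [Algebra ℚ K]
    [Algebra.IsAlgebraic ℚ F] [Algebra.IsAlgebraic ℚ K]
    [Countable F] [Countable K] :
    Nonempty (F ≃+* K) ↔
      ∀ p : Polynomial ℚ,
        (∃ x : F, aeval x p = 0) ↔ (∃ y : K, aeval y p = 0) :=
  algebraic_fields_iso_iff_same_roots_general F K
end
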